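/- arXiv:1406.5480 — 3 statements merged into one kernel-verified Lean document; each statement's English description precedes it below -/
import Mathlib

section
/- If D[i,j] = h and D[i+1,j+1] = h+1 in the standard edit-distance DP matrix, then every cell D[i',j'] on the same diagonal (j' − i' = j − i) with i < i' and lying strictly between D[i,j] and the next lowest cell with value h+1 has value exactly h+1. -/
/-- The standard dynamic programming matrix for the edit distance of `x` and `y`:
`D[i,0] = i`, `D[0,j] = j`, and
`D[i,j] = min (D[i-1,j-1] + [x[i-1] ≠ y[j-1]]) (min (D[i-1,j] + 1) (D[i,j-1] + 1))`. -/
def editDP {α : Type*} [DecidableEq α] [Inhabited α] (x y : List α) : ℕ → ℕ → ℕ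
  | 0, j => j
  | i + 1, 0 => i + 1
  | i + 1, j + 1 =>
    min (editDP x y i j + (if x.getD i default = y.getD j default then 0 else 1))
      (min (editDP x y i (j + 1) + 1) (editDP x y (i + 1) j + 1))
termination_by i j => (i, j)

section Aux

variable {α : Type*} [DecidableEq α] [Inhabited α] (x y : List α)

lemma editDP_step (i j : ℕ) : editDP x y (i+1) (j+1) =
    min (editDP x y i j + (if x.getD i default = y.getD j default then 0 else 1))
      (min (editDP x y i (j + 1) + 1) (editDP x y (i + 1) j + 1)) := by
  rw [editDP]

lemma editDP_down (i j : ℕ) : editDP x y (i+1) j ≤ editDP x y i j + 1 := by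
  cases j with
  | zero => cases i <;> simp [editDP]
  | succ j => rw [editDP_step]; omega

lemma editDP_right_rev (i : ℕ) : ∀ j, editDP x y i j ≤ editDP x y i (j+1) + 1 := by
  induction i with
  | zero => intro j; simp [editDP]; omega
  | succ i ih =>
    intro j
    have h1 := editDP_down x y i j
    have h2 := ih j
    rw [editDP_step]
    by_cases hxy : x.getD i default = y.getD j default <;> simp [hxy] <;> omega

lemma editDP_right (i j : ℕ) : editDP x y i (j+1) ≤ editDP x y i j + 1 := by
  cases i with
  | zero => simp [editDP]
  | succ i => rw [editDP_step]; omega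

lemma editDP_down_rev (j : ℕ) : ∀ i, editDP x y i j ≤ editDP x y (i+1) j + 1 := by
  induction j with
  | zero => intro i; cases i <;> simp [editDP]
  | succ j ih =>
    intro i
    have h1 := editDP_right x y i j
    have h2 := ih i
    rw [editDP_step]
    by_cases hxy : x.getD i default = y.getD j default <;> simp [hxy] <;> omega

lemma editDP_diag_mono (i j : ℕ) : editDP x y i j ≤ editDP x y (i+1) (j+1) := by
  have h1 := editDP_right_rev x y i j
  have h2 := editDP_down_rev x y j i
  rw [editDP_step]
  by_cases hxy : x.getD i default = y.getD j default <;> simp [hxy] <;> omega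

lemma editDP_diag_mono_add (i j : ℕ) : ∀ k, editDP x y i j ≤ editDP x y (i+k) (j+k) := by
  intro k
  induction k with
  | zero => rfl
  | succ k ih => exact ih.trans (editDP_diag_mono x y (i+k) (j+k))

end Aux

/-- If `D[i,j] = h` and `D[i+1,j+1] = h+1` (so `(i,j)` is the lowest cell with value
`h` on its diagonal), and `(i₂,j₂)` is the next lowest cell with value `h+1` on the
same diagonal, then every cell `(i',j')` on that diagonal strictly between them
has value exactly `h + 1`. -/
theorem editDP_between_waves {α : Type*} [DecidableEq α] [Inhabited α]
    (x y : List α) (h i j i₂ j₂ i' j' : ℕ)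
    (hv : i₂ + 1 ≤ x.length) (hw : j₂ + 1 ≤ y.length)
    (hdiag₂ : j₂ + i = j + i₂) (hdiag' : j' + i = j + i')
    (hlow : editDP x y i j = h) (hlow' : editDP x y (i + 1) (j + 1) = h + 1)
    (hnext : editDP x y i₂ j₂ = h + 1) (hnext' : editDP x y (i₂ + 1) (j₂ + 1) = h + 2)
    (h1 : i < i') (h2 : i' < i₂) :
    editDP x y i' j' = h + 1 := by
  obtain ⟨k, hk⟩ : ∃ k, i' = (i+1) + k := ⟨i' - (i+1), by omega⟩
  obtain ⟨m, hm⟩ : ∃ m, i₂ = i' + m := ⟨i₂ - i', by omega⟩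
  have hj' : j' = (j+1) + k := by omega
  have hj₂ : j₂ = j' + m := by omega
  have lb := editDP_diag_mono_add x y (i+1) (j+1) k
  have ub := editDP_diag_mono_add x y i' j' m
  rw [← hk, ← hj'] at lb
  rw [← hm, ← hj₂] at ub
  omega
end

section
/- If a q-gram s occurs in a string u (|u| ≥ q) with fewer than cq differences under edit distance, then s has a common subsequence of length at least q − cq with some q-gram (factor of length q) of u. -/
section LevenshteinCompat

/-- Costs for the Levenshtein edit distance (as in the former `Mathlib.Data.List.EditDistance.Defs`). -/
structure Levenshtein.Cost (α β δ : Type*) where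
  /-- Cost of deleting a letter. -/
  delete : α → δ
  /-- Cost of inserting a letter. -/
  insert : β → δ
  /-- Cost of substituting a letter. -/
  substitute : α → β → δ

/-- The default cost structure: each insertion, deletion or substitution of distinct letters costs 1. -/
def Levenshtein.defaultCost {α : Type*} [DecidableEq α] : Levenshtein.Cost α α ℕ where
  delete _ := 1
  insert _ := 1
  substitute a b := if a = b then 0 else 1

/-- One step of the dynamic program for the Levenshtein distance. -/
def Levenshtein.impl {α β δ : Type*} [AddZeroClass δ] [Min δ] (C : Levenshtein.Cost α β δ)
    (xs : List α) (y : β) (d : {r : List δ // 0 < r.length}) : {r : List δ // 0 < r.length} :=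
  let ⟨ds, w⟩ := d
  xs.zip (ds.zip ds.tail) |>.foldr
    (init := ⟨[ds.getLast (List.ne_nil_of_length_pos w) + C.insert y], by simp⟩)
    (fun ⟨x, d₀, d₁⟩ ⟨r, w⟩ =>
      ⟨min (C.delete x + r[0]) (min (C.insert y + d₀) (C.substitute x y + d₁)) :: r, by simp⟩)

/-- The Levenshtein distances from each suffix of `xs` to `ys`. -/
def suffixLevenshtein {α β δ : Type*} [AddZeroClass δ] [Min δ] (C : Levenshtein.Cost α β δ)
    (xs : List α) (ys : List β) : {r : List δ // 0 < r.length} :=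
  ys.foldr
    (Levenshtein.impl C xs)
    (xs.foldr (init := ⟨[0], by simp⟩) (fun a ⟨r, w⟩ => ⟨(C.delete a + r[0]) :: r, by simp⟩))

/-- The Levenshtein edit distance between two lists, with respect to the costs `C`. -/
def levenshtein {α β δ : Type*} [AddZeroClass δ] [Min δ] (C : Levenshtein.Cost α β δ)
    (xs : List α) (ys : List β) : δ :=
  let ⟨r, w⟩ := suffixLevenshtein C xs ys
  r[0]

end LevenshteinCompat

/-!
Fix an optimal alignment of `s` with the occurrence `v`. The letters it matches form a common
subsequence `w` of `s` and `v`, and every letter of `s` or of `v` left unmatched costs an edit, so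
`|s| ≤ |w| + d` and `|v| ≤ |w| + d` for `d = δ_E(s, v) < cq`. If `|v| ≥ q`, cutting `v` down to its
first `q` letters removes at most `|v| - q` letters of `w`, leaving `q - d` of them by the second
bound. If `|v| < q`, `v` extends to a `q`-gram of `u` that still contains `w`.
-/

namespace Levenshtein

variable {α β δ : Type*} [AddZeroClass δ] [Min δ] (C : Cost α β δ)

theorem impl_cons (x : α) (xs : List α) (y : β) (d : δ) (ds : List δ) (h : 0 < ds.length) :
    (impl C (x :: xs) y ⟨d :: ds, by simp⟩).1 =
      min (C.delete x + (impl C xs y ⟨ds, h⟩).1[0]'(impl C xs y ⟨ds, h⟩).2)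
        (min (C.insert y + d) (C.substitute x y + ds[0])) :: (impl C xs y ⟨ds, h⟩).1 := by
  obtain ⟨d', ds', rfl⟩ := List.exists_cons_of_length_pos h
  rfl

end Levenshtein

open Levenshtein

section Recursion

variable {α β δ : Type*} [AddZeroClass δ] [Min δ] (C : Cost α β δ)

theorem suffixLevenshtein_nil_left (ys : List β) :
    (suffixLevenshtein C ([] : List α) ys).1 = [levenshtein C [] ys] := by
  cases ys <;> rfl

theorem suffixLevenshtein_cons_left_tail (x : α) (xs : List α) (ys : List β) :
    (suffixLevenshtein C (x :: xs) ys).1.tail = (suffixLevenshtein C xs ys).1 := by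
  induction ys with
  | nil => rfl
  | cons y ys ih =>
    show (impl C (x :: xs) y (suffixLevenshtein C (x :: xs) ys)).1.tail =
      (impl C xs y (suffixLevenshtein C xs ys)).1
    generalize suffixLevenshtein C (x :: xs) ys = S at ih ⊢
    obtain ⟨_ | ⟨d, ds⟩, hS⟩ := S
    · simp at hS
    · obtain rfl : ds = (suffixLevenshtein C xs ys).1 := ih
      rw [impl_cons C x xs y d _ (suffixLevenshtein C xs ys).2]
      rfl

theorem suffixLevenshtein_cons_left (x : α) (xs : List α) (ys : List β) :
    suffixLevenshtein C (x :: xs) ys =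
      ⟨levenshtein C (x :: xs) ys :: (suffixLevenshtein C xs ys).1, by simp⟩ := by
  apply Subtype.ext
  rw [← suffixLevenshtein_cons_left_tail C x xs ys]
  show _ = (suffixLevenshtein C (x :: xs) ys).1[0]'(suffixLevenshtein C _ ys).2 :: _
  generalize suffixLevenshtein C (x :: xs) ys = S
  obtain ⟨_ | _, hS⟩ := S
  · simp at hS
  · rfl

@[simp]
theorem levenshtein_nil_cons (y : β) (ys : List β) :
    levenshtein C ([] : List α) (y :: ys) = levenshtein C [] ys + C.insert y := by
  show (impl C [] y (suffixLevenshtein C [] ys)).1[0]'(impl C [] y _).2 = _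
  simp [impl, suffixLevenshtein_nil_left]

@[simp]
theorem levenshtein_cons_nil (x : α) (xs : List α) :
    levenshtein C (x :: xs) ([] : List β) = C.delete x + levenshtein C xs [] := rfl

theorem levenshtein_cons_cons (x : α) (xs : List α) (y : β) (ys : List β) :
    levenshtein C (x :: xs) (y :: ys) =
      min (C.delete x + levenshtein C xs (y :: ys))
        (min (C.insert y + levenshtein C (x :: xs) ys) (C.substitute x y + levenshtein C xs ys)) := by
  show (impl C (x :: xs) y (suffixLevenshtein C (x :: xs) ys)).1[0]'(impl C _ y _).2 = _
  simp only [suffixLevenshtein_cons_left, impl_cons C x xs y _ _ (suffixLevenshtein C xs ys).2]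
  rfl

end Recursion

section DefaultCost

variable {α : Type*} [DecidableEq α]

@[simp]
theorem Levenshtein.defaultCost_delete (a : α) : (defaultCost : Cost α α ℕ).delete a = 1 := rfl

@[simp]
theorem Levenshtein.defaultCost_insert (a : α) : (defaultCost : Cost α α ℕ).insert a = 1 := rfl

@[simp]
theorem Levenshtein.defaultCost_substitute (a b : α) :
    (defaultCost : Cost α α ℕ).substitute a b = if a = b then 0 else 1 := rfl

@[simp]
theorem levenshtein_defaultCost_nil_left (v : List α) :
    levenshtein defaultCost ([] : List α) v = v.length := by
  induction v with
  | nil => rfl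
  | cons b v ih => simp [ih]

@[simp]
theorem levenshtein_defaultCost_nil_right (s : List α) :
    levenshtein defaultCost s ([] : List α) = s.length := by
  induction s with
  | nil => rfl
  | cons a s ih => simp [ih, add_comm]

theorem exists_common_sublist_of_levenshtein (s v : List α) :
    ∃ w : List α, w.Sublist s ∧ w.Sublist v ∧
      s.length ≤ w.length + levenshtein defaultCost s v ∧
      v.length ≤ w.length + levenshtein defaultCost s v := by
  induction s generalizing v with
  | nil => exact ⟨[], .slnil, List.nil_sublist v, by simp, by simp⟩
  | cons a s ihs =>
    induction v with
    | nil => exact ⟨[], List.nil_sublist _, .slnil, by simp, by simp⟩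
    | cons b v ihv =>
      rw [levenshtein_cons_cons]
      -- each of the three alternatives in the recursion yields a witness for its own value
      let P (n : ℕ) : Prop := ∃ w : List α, w.Sublist (a :: s) ∧ w.Sublist (b :: v) ∧
        (a :: s).length ≤ w.length + n ∧ (b :: v).length ≤ w.length + n
      refine min_rec' P ?delete (min_rec' P ?insert ?substitute)
      case delete =>
        obtain ⟨w, hws, hwv, hs, hv⟩ := ihs (b :: v)
        refine ⟨w, hws.cons a, hwv, ?_, ?_⟩ <;> simp at hs hv ⊢ <;> omega
      case insert =>
        obtain ⟨w, hws, hwv, hs, hv⟩ := ihv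
        refine ⟨w, hws, hwv.cons b, ?_, ?_⟩ <;> simp at hs hv ⊢ <;> omega
      case substitute =>
        obtain ⟨w, hws, hwv, hs, hv⟩ := ihs v
        by_cases hab : a = b
        · subst hab
          refine ⟨a :: w, hws.cons_cons a, hwv.cons_cons a, ?_, ?_⟩ <;> simp at hs hv ⊢ <;> omega
        · refine ⟨w, hws.cons a, hwv.cons b, ?_, ?_⟩ <;> simp [hab] at hs hv ⊢ <;> omega

end DefaultCost

theorem List.Sublist.exists_sublist_take {α : Type*} {w v : List α} (h : w.Sublist v) (n : ℕ) :
    ∃ w' : List α, w'.Sublist w ∧ w'.Sublist (v.take n) ∧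
      w.length ≤ w'.length + (v.length - n) := by
  rw [← List.take_append_drop n v, List.sublist_append_iff] at h
  obtain ⟨w₁, w₂, rfl, h₁, h₂⟩ := h
  refine ⟨w₁, List.sublist_append_left w₁ w₂, h₁, ?_⟩
  simpa using h₂.length_le

theorem List.IsInfix.exists_infix_length_eq {α : Type*} {v u : List α} (h : v <:+: u) {n : ℕ}
    (hvn : v.length ≤ n) (hnu : n ≤ u.length) :
    ∃ v' : List α, v <:+: v' ∧ v' <:+: u ∧ v'.length = n := by
  obtain ⟨x, y, rfl⟩ := h
  -- the `k` missing letters come from `y` as far as possible, the rest from the end of `x`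
  set k := n - v.length
  set i := x.length - (k - y.length)
  refine ⟨x.drop i ++ v ++ y.take k, ⟨x.drop i, y.take k, rfl⟩,
    ⟨x.take i, y.drop k, by simp only [List.append_assoc, List.take_append_drop,
      ← List.append_assoc (List.take i x)]⟩, ?_⟩
  simp only [List.length_append] at hnu ⊢
  simp only [List.length_drop, List.length_take]
  omega

theorem qgram_common_subsequence_general {α : Type*} [DecidableEq α]
    (s u : List α) (q : ℕ) (c : ℝ)
    (hs : s.length = q) (hu : q ≤ u.length)
    (hocc : ∃ v : List α, v <:+: u ∧
      ((levenshtein Levenshtein.defaultCost s v : ℕ) : ℝ) < c * q) :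
    ∃ v w : List α, v <:+: u ∧ v.length = q ∧
      w.Sublist s ∧ w.Sublist v ∧ (q : ℝ) - c * q ≤ w.length := by
  obtain ⟨v, hvu, hlev⟩ := hocc
  set d := levenshtein defaultCost s v
  obtain ⟨w, hws, hwv, hsw, hvw⟩ := exists_common_sublist_of_levenshtein s v
  suffices ∃ v' w' : List α, v' <:+: u ∧ v'.length = q ∧ w'.Sublist w ∧ w'.Sublist v' ∧
      q ≤ w'.length + d by
    obtain ⟨v', w', hv'u, hv'q, hw'w, hw'v', hq⟩ := this
    refine ⟨v', w', hv'u, hv'q, hw'w.trans hws, hw'v', ?_⟩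
    have : (q : ℝ) ≤ w'.length + d := by exact_mod_cast hq
    linarith
  rcases le_total q v.length with hqv | hvq
  · obtain ⟨w', hw'w, hw'v, hlen⟩ := hwv.exists_sublist_take q
    exact ⟨v.take q, w', (List.take_prefix q v).isInfix.trans hvu, List.length_take_of_le hqv,
      hw'w, hw'v, by omega⟩
  · obtain ⟨v', hvv', hv'u, hv'q⟩ := hvu.exists_infix_length_eq hvq hu
    exact ⟨v', w, hv'u, hv'q, .refl w, hwv.trans hvv'.sublist, by omega⟩

/-- If a `q`-gram `s` occurs in a string `u` (`|u| ≥ q`) with fewer than `c·q`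
differences under edit distance, then `s` has a common subsequence of length at
least `q − c·q` with some `q`-gram (factor of length `q`) of `u`. -/
theorem qgram_common_subsequence {α : Type*} [DecidableEq α]
    (s u : List α) (q : ℕ) (c : ℝ) (hc0 : 0 < c) (hc1 : c < 1)
    (hs : s.length = q) (hu : q ≤ u.length)
    (hocc : ∃ v : List α, v <:+: u ∧
      ((levenshtein Levenshtein.defaultCost s v : ℕ) : ℝ) < c * q) :
    ∃ v w : List α, v <:+: u ∧ v.length = q ∧
      w.Sublist s ∧ w.Sublist v ∧ (q : ℝ) - c * q ≤ w.length :=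
  qgram_common_subsequence_general s u q c hs hu hocc
end

section
/- For σ ≥ 9 and 0 < c < 1 − e/√σ, the quantity d = 1 − c + 2c·log_σ(c) + 2(1−c)·log_σ(1−c) is strictly positive. -/
/-- For alphabet size `σ ≥ 9` and `0 < c < 1 − e/√σ`, the exponent
`d = 1 − c + 2c·log_σ c + 2(1−c)·log_σ(1−c)` from the Chang–Marr bound is
strictly positive. -/
theorem chang_marr_exponent_pos (σ c : ℝ) (hσ : 9 ≤ σ)
    (hc0 : 0 < c) (hc1 : c < 1 - Real.exp 1 / Real.sqrt σ) :
    0 < 1 - c + 2 * c * Real.logb σ c + 2 * (1 - c) * Real.logb σ (1 - c) := by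
  have hσ0 : (0:ℝ) < σ := by linarith
  have hσ1 : (1:ℝ) < σ := by linarith
  have hs : 0 < Real.sqrt σ := Real.sqrt_pos.mpr hσ0
  have he : 0 < Real.exp 1 := Real.exp_pos 1
  have ha : 0 < 1 - c := lt_trans (div_pos he hs) (by linarith)
  have hc1' : Real.exp 1 / Real.sqrt σ < 1 - c := by linarith
  have h1 : Real.exp 1 < (1 - c) * Real.sqrt σ := (div_lt_iff₀ hs).mp hc1'
  have hL : 0 < Real.log σ := Real.log_pos hσ1
  have h2 : 1 < Real.log (1 - c) + Real.log σ / 2 := by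
    have h := Real.log_lt_log he h1
    rw [Real.log_exp, Real.log_mul (ne_of_gt ha) (ne_of_gt hs),
      Real.log_sqrt (le_of_lt hσ0)] at h
    linarith
  have hb1 : c - 1 ≤ c * Real.log c := by
    have h := Real.log_le_sub_one_of_pos (show (0:ℝ) < 1/c by positivity)
    rw [Real.log_div one_ne_zero (ne_of_gt hc0), Real.log_one] at h
    have h' : 1 - 1/c ≤ Real.log c := by linarith
    have h'' := mul_le_mul_of_nonneg_left h' hc0.le
    have hcc : c * (1 - 1/c) = c - 1 := by field_simp
    linarith [hcc ▸ h'']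
  have hb2 : 2 * (1 - c) < (1 - c) * Real.log σ + 2 * (1 - c) * Real.log (1 - c) := by
    nlinarith [mul_pos ha (show 0 < Real.log (1-c) + Real.log σ / 2 - 1 by linarith)]
  have key : 0 < (1 - c) * Real.log σ + 2 * c * Real.log c + 2 * (1 - c) * Real.log (1 - c) := by
    nlinarith
  have hgoal : 1 - c + 2 * c * Real.logb σ c + 2 * (1 - c) * Real.logb σ (1 - c)
      = ((1 - c) * Real.log σ + 2 * c * Real.log c + 2 * (1 - c) * Real.log (1 - c)) / Real.log σ := by
    rw [Real.logb, Real.logb]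
    field_simp
  rw [hgoal]
  exact div_pos key hL
end
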